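/- (Equation (16)) For all integers n ≥ 0 and k ≥ 1, the difference ∑_{x=0}^{p^{k+1} − 1} (−1)^x [x]_q^n − ∑_{i=0}^{p^k − 1} (−1)^i [i]_q^n is divisible by [p^k]_q in ℤ_p, i.e. T_n(k+1) ≡ T_n(k) (mod [p^k]_q), where T_n(k) = ∑_{x=0}^{p^k − 1} (−1)^x [x]_q^n. -/
import Mathlib


/-- The `q`-analogue `[x]_q = 1 + q + ⋯ + q^(x-1)` in `ℤ_p`. -/
noncomputable def qnum {p : ℕ} [Fact p.Prime] (q : ℤ_[p]) (x : ℕ) : ℤ_[p] :=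
  ∑ l ∈ Finset.range x, q ^ l

lemma qnum_add {p : ℕ} [Fact p.Prime] (q : ℤ_[p]) (a b : ℕ) :
    qnum q (a + b) = qnum q a + q ^ a * qnum q b := by
  simp only [qnum, Finset.sum_range_add, Finset.mul_sum, pow_add]

lemma qnum_dvd_mul {p : ℕ} [Fact p.Prime] (q : ℤ_[p]) (m j : ℕ) :
    qnum q m ∣ qnum q (j * m) := by
  induction j with
  | zero => simp [qnum]
  | succ j ih =>
    rw [Nat.succ_mul, qnum_add]
    exact dvd_add ih (Dvd.dvd.mul_left dvd_rfl _)

lemma sum_range_mul_blocks {p : ℕ} [Fact p.Prime] (f : ℕ → ℤ_[p]) (t m : ℕ) :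
    ∑ x ∈ Finset.range (t * m), f x
      = ∑ j ∈ Finset.range t, ∑ x ∈ Finset.range m, f (j * m + x) := by
  induction t with
  | zero => simp
  | succ t ih =>
    rw [Nat.succ_mul, Finset.sum_range_add, ih, Finset.sum_range_succ]

/-- **Equation (16).** For `n ≥ 0` and `k ≥ 1`,
`T_n(k+1) ≡ T_n(k) (mod [p^k]_q)` where `T_n(k) = ∑_{x=0}^{p^k−1} (−1)^x [x]_q^n`. -/
theorem eq16 (p : ℕ) [Fact p.Prime] (hp : Odd p)
    (q : ℤ_[p]) (hq : (p : ℤ_[p]) ∣ (q - 1))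
    (n k : ℕ) (hk : 1 ≤ k) :
    qnum q (p ^ k) ∣
      (∑ x ∈ Finset.range (p ^ (k + 1)), (-1 : ℤ_[p]) ^ x * (qnum q x) ^ n)
        - ∑ i ∈ Finset.range (p ^ k), (-1 : ℤ_[p]) ^ i * (qnum q i) ^ n := by
  set m := p ^ k with hm
  set d := qnum q m with hd
  set T : ℤ_[p] := ∑ i ∈ Finset.range m, (-1 : ℤ_[p]) ^ i * (qnum q i) ^ n with hT
  have hmodd : Odd m := hp.pow
  have hsplit : (∑ x ∈ Finset.range (p ^ (k + 1)), (-1 : ℤ_[p]) ^ x * (qnum q x) ^ n)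
      = ∑ j ∈ Finset.range p, ∑ x ∈ Finset.range m,
          (-1 : ℤ_[p]) ^ (j * m + x) * (qnum q (j * m + x)) ^ n := by
    rw [show p ^ (k + 1) = p * m by ring]
    exact sum_range_mul_blocks _ p m
  have hsign : ∑ j ∈ Finset.range p, (-1 : ℤ_[p]) ^ j = 1 := by
    rw [neg_one_geom_sum, if_neg (by simpa using hp)]
  have key : ∀ j ∈ Finset.range p,
      d ∣ (∑ x ∈ Finset.range m, (-1 : ℤ_[p]) ^ (j * m + x) * (qnum q (j * m + x)) ^ n)
            - (-1 : ℤ_[p]) ^ j * T := by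
    intro j _
    rw [hT, Finset.mul_sum, ← Finset.sum_sub_distrib]
    refine Finset.dvd_sum fun x _ => ?_
    have hsgn : ((-1 : ℤ_[p])) ^ (j * m + x) = (-1) ^ j * (-1) ^ x := by
      rw [pow_add, mul_comm j m, pow_mul, hmodd.neg_one_pow]
    have hdvd : d ∣ (qnum q (j * m + x)) ^ n - (qnum q x) ^ n := by
      refine dvd_trans ?_ (sub_dvd_pow_sub_pow _ _ n)
      have heq : qnum q (j * m + x) - qnum q x = q ^ x * qnum q (j * m) := by
        rw [Nat.add_comm, qnum_add]; ring
      rw [heq]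
      exact (qnum_dvd_mul q m j).mul_left _
    calc d ∣ ((-1 : ℤ_[p]) ^ j * (-1) ^ x) * ((qnum q (j * m + x)) ^ n - (qnum q x) ^ n) :=
          Dvd.dvd.mul_left hdvd _
      _ = (-1) ^ (j * m + x) * (qnum q (j * m + x)) ^ n
            - (-1) ^ j * ((-1) ^ x * (qnum q x) ^ n) := by rw [hsgn]; ring
  have := Finset.dvd_sum key
  have h2 : (∑ j ∈ Finset.range p, (-1 : ℤ_[p]) ^ j * T) = T := by
    rw [← Finset.sum_mul, hsign, one_mul]
  rw [Finset.sum_sub_distrib, h2, ← hsplit] at this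
  exact this
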